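/- arXiv:1506.08030 — 2 statements merged into one kernel-verified Lean document; each statement's English description precedes it below -/
import Mathlib

section
/- There exists a model p₀ of the knowledge base K = (P_B, 𝕊) such that P_{p₀}(c) = Σ over worlds W with O_W ⊨ c of P_B(W); in particular, the infimum defining P_K(c) is attained (it is a minimum). -/
open scoped ENNReal

namespace BL

variable {I A C V : Type*}

/-- A world `W` satisfies the context `κ` if it agrees with `κ` wherever it is defined. -/
def SatCtx (W : V → Bool) (κ : V → Option Bool) : Prop :=
  ∀ v b, κ v = some b → W v = b

/-- The ontology induced by the world `W` from the `V`-ontology `𝕊`. -/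
def OW (𝕊 : Finset (A × (V → Option Bool))) (W : V → Bool) : Set A :=
  {α | ∃ κ, (α, κ) ∈ 𝕊 ∧ SatCtx W κ}

/-- `i` is a model of the ontology `O`. -/
def IsOntModel (satA : I → A → Prop) (O : Set A) (i : I) : Prop :=
  ∀ α ∈ O, satA i α

/-- The ontology `O` entails the consequence `c`. -/
def Entails (satA : I → A → Prop) (satC : I → C → Prop) (O : Set A) (c : C) : Prop :=
  ∀ i : I, IsOntModel satA O i → satC i c

/-- A probabilistic interpretation `p` (a finitely supported PMF on pairs of an
interpretation and a world) is a model of the knowledge base `(PB, 𝕊)`. -/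
def IsKBModel (satA : I → A → Prop) (PB : PMF (V → Bool))
    (𝕊 : Finset (A × (V → Option Bool))) (p : PMF (I × (V → Bool))) : Prop :=
  p.support.Finite ∧
    (∀ iW ∈ p.support, IsOntModel satA (OW 𝕊 iW.2) iW.1) ∧
    ∀ W : V → Bool, ∑' i : I, p (i, W) = PB W

/-- `P_p(c)`: the probability of the consequence `c` w.r.t. `p`. -/
noncomputable def Pp (satC : I → C → Prop) (p : PMF (I × (V → Bool))) (c : C) : ℝ≥0∞ :=
  ∑' iW : I × (V → Bool), {x : I × (V → Bool) | satC x.1 c}.indicator (⇑p) iW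

/-- `P_K(c)`: the infimum of `P_p(c)` over all models `p` of the knowledge base. -/
noncomputable def PK (satA : I → A → Prop) (satC : I → C → Prop) (PB : PMF (V → Bool))
    (𝕊 : Finset (A × (V → Option Bool))) (c : C) : ℝ≥0∞ :=
  sInf {x : ℝ≥0∞ | ∃ p : PMF (I × (V → Bool)), IsKBModel satA PB 𝕊 p ∧ x = Pp satC p c}

/-
Choose, for every world `W`, a model `f W` of `O_W` that falsifies `c` whenever `O_W ⊭ c`, and
let `p₀` be the image of `P_B` under `W ↦ (f W, W)`. Then `P_{p₀}(c)` is exactly the `P_B`-mass of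
the worlds with `O_W ⊨ c`. Conversely every model `p` of the knowledge base has `P_B` as its
marginal on worlds and is concentrated on pairs `(i, W)` with `i ⊨ O_W`, so it gives `c` at least
that mass.
-/

theorem _root_.PMF.map_snd_apply {α β : Type*} (p : PMF (α × β)) (b : β) :
    p.map Prod.snd b = ∑' a, p (a, b) := by
  rw [PMF.map_apply, ENNReal.tsum_prod']
  simp

theorem exists_isOntModel_sat_imp_entails {satA : I → A → Prop} {satC : I → C → Prop}
    {O : Set A} (c : C) (h : ∃ i, IsOntModel satA O i) :
    ∃ i, IsOntModel satA O i ∧ (satC i c → Entails satA satC O c) := by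
  by_cases hE : Entails satA satC O c
  · obtain ⟨i, hi⟩ := h
    exact ⟨i, hi, fun _ => hE⟩
  · obtain ⟨i, hi, hic⟩ : ∃ i, IsOntModel satA O i ∧ ¬ satC i c := by
      simpa [Entails] using hE
    exact ⟨i, hi, fun h => absurd h hic⟩

theorem Pp_eq_toOuterMeasure (satC : I → C → Prop) (p : PMF (I × (V → Bool))) (c : C) :
    Pp satC p c = p.toOuterMeasure {x | satC x.1 c} :=
  (p.toOuterMeasure_apply _).symm

theorem IsKBModel.map_snd {satA : I → A → Prop} {PB : PMF (V → Bool)}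
    {𝕊 : Finset (A × (V → Option Bool))} {p : PMF (I × (V → Bool))}
    (hp : IsKBModel satA PB 𝕊 p) : p.map Prod.snd = PB := by
  ext W
  rw [PMF.map_snd_apply, hp.2.2 W]

theorem IsKBModel.toOuterMeasure_entails_le_Pp {satA : I → A → Prop} {PB : PMF (V → Bool)}
    {𝕊 : Finset (A × (V → Option Bool))} {p : PMF (I × (V → Bool))}
    (hp : IsKBModel satA PB 𝕊 p) (satC : I → C → Prop) (c : C) :
    PB.toOuterMeasure {W | Entails satA satC (OW 𝕊 W) c} ≤ Pp satC p c := by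
  rw [← hp.map_snd, PMF.toOuterMeasure_map_apply, Pp_eq_toOuterMeasure]
  exact p.toOuterMeasure_mono fun x ⟨hE, hx⟩ => hE x.1 (hp.2.1 x hx)

theorem isKBModel_map_graph [Finite V] {satA : I → A → Prop} (PB : PMF (V → Bool))
    {𝕊 : Finset (A × (V → Option Bool))} {f : (V → Bool) → I}
    (hf : ∀ W, IsOntModel satA (OW 𝕊 W) (f W)) :
    IsKBModel satA PB 𝕊 (PB.map fun W => (f W, W)) := by
  refine ⟨?_, ?_, fun W => ?_⟩
  · rw [PMF.support_map]
    exact Set.toFinite _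
  · rw [PMF.support_map]
    rintro _ ⟨W, -, rfl⟩
    exact hf W
  · rw [← PMF.map_snd_apply, PMF.map_comp]
    exact congrArg (· W) PB.map_id

/-- the infimum defining `P_K(c)` is attained: there is a model `p₀` of the
knowledge base with `P_{p₀}(c) = Σ_{O_W ⊨ c} P_B(W)`, and `p₀` realizes the minimum. -/
theorem probabilistic_entailment_attained [Fintype V]
    (satA : I → A → Prop) (satC : I → C → Prop)
    (PB : PMF (V → Bool)) (𝕊 : Finset (A × (V → Option Bool))) (c : C)
    (hmod : ∀ W : V → Bool, ∃ i : I, IsOntModel satA (OW 𝕊 W) i) :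
    ∃ p₀ : PMF (I × (V → Bool)), IsKBModel satA PB 𝕊 p₀ ∧
      Pp satC p₀ c
        = (∑' W : V → Bool,
            {W : V → Bool | Entails satA satC (OW 𝕊 W) c}.indicator (⇑PB) W) ∧
      ∀ p : PMF (I × (V → Bool)), IsKBModel satA PB 𝕊 p → Pp satC p₀ c ≤ Pp satC p c := by
  choose f hf_model hf_entails using fun W => exists_isOntModel_sat_imp_entails c (hmod W)
  have hPp : Pp satC (PB.map fun W => (f W, W)) c
      = PB.toOuterMeasure {W | Entails satA satC (OW 𝕊 W) c} := by
    rw [Pp_eq_toOuterMeasure, PMF.toOuterMeasure_map_apply]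
    congr 1
    ext W
    exact ⟨hf_entails W, fun hE => hE _ (hf_model W)⟩
  refine ⟨_, isKBModel_map_graph PB hf_model, hPp.trans (PB.toOuterMeasure_apply _),
    fun p hp => hPp ▸ hp.toOuterMeasure_entails_le_Pp satC c⟩

end BL
end

section
/- If φ is a context formula for c with respect to 𝕊, then for every t ≥ 1 there exists a t-step model q₀ of K = ((μ, T), 𝕊) such that P_{q₀}(c[1:t]) = Σ over paths W : Fin t → (V → Bool) with W i satisfying φ for some i, of π_t(W); in particular, the infimum defining P_K(c[1:t]) is attained. -/
open scoped ENNReal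

namespace DBL

variable {I A C V : Type*}

/-- A world `W` satisfies the context `κ` if it agrees with `κ` wherever it is defined. -/
def SatCtx (W : V → Bool) (κ : V → Option Bool) : Prop :=
  ∀ v b, κ v = some b → W v = b

/-- The ontology induced by the world `W` from the `V`-ontology `𝕊`. -/
def OW (𝕊 : Finset (A × (V → Option Bool))) (W : V → Bool) : Set A :=
  {α | ∃ κ, (α, κ) ∈ 𝕊 ∧ SatCtx W κ}

/-- `i` is a model of the ontology `O`. -/
def IsOntModel (satA : I → A → Prop) (O : Set A) (i : I) : Prop :=
  ∀ α ∈ O, satA i α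

/-- The ontology `O` entails the consequence `c`. -/
def Entails (satA : I → A → Prop) (satC : I → C → Prop) (O : Set A) (c : C) : Prop :=
  ∀ i : I, IsOntModel satA O i → satC i c

/-- The `t`-step path distribution of the Markov chain with initial distribution `μ` and
transition kernel `T`: `π_t(W) = μ(W 0) · ∏_{i < t-1} T(W i)(W (i+1))`. -/
noncomputable def pathProb {S : Type*} (μ : PMF S) (T : S → PMF S)
    (t : ℕ) (W : Fin t → S) : ℝ≥0∞ :=
  if h : 0 < t then
    μ (W ⟨0, h⟩) * ∏ i : Fin (t - 1),
      T (W ⟨(i : ℕ), by have := i.2; omega⟩) (W ⟨(i : ℕ) + 1, by have := i.2; omega⟩)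
  else 1

/-- A `t`-step probabilistic interpretation `q` (a finitely supported PMF on pairs of a
tuple of interpretations and a path of worlds) is a `t`-step model of `((μ, T), 𝕊)`. -/
def IsStepModel (satA : I → A → Prop) (μ : PMF (V → Bool))
    (T : (V → Bool) → PMF (V → Bool)) (𝕊 : Finset (A × (V → Option Bool))) (t : ℕ)
    (q : PMF ((Fin t → I) × (Fin t → (V → Bool)))) : Prop :=
  q.support.Finite ∧
    (∀ iw ∈ q.support, ∀ s : Fin t, IsOntModel satA (OW 𝕊 (iw.2 s)) (iw.1 s)) ∧
    ∀ W : Fin t → (V → Bool), ∑' i : Fin t → I, q (i, W) = pathProb μ T t W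

/-- `P_q(c[1:t])`: the `q`-probability that `c` is observed at some step `s < t`. -/
noncomputable def Pqt (satC : I → C → Prop) (t : ℕ)
    (q : PMF ((Fin t → I) × (Fin t → (V → Bool)))) (c : C) : ℝ≥0∞ :=
  ∑' iw : (Fin t → I) × (Fin t → (V → Bool)),
    {x : (Fin t → I) × (Fin t → (V → Bool)) | ∃ s : Fin t, satC (x.1 s) c}.indicator (⇑q) iw

/-- `P_K(c[1:t])`: the infimum of `P_q(c[1:t])` over all `t`-step models `q` of the KB. -/
noncomputable def PKbound (satA : I → A → Prop) (satC : I → C → Prop)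
    (μ : PMF (V → Bool)) (T : (V → Bool) → PMF (V → Bool))
    (𝕊 : Finset (A × (V → Option Bool))) (c : C) (t : ℕ) : ℝ≥0∞ :=
  sInf {x : ℝ≥0∞ | ∃ q : PMF ((Fin t → I) × (Fin t → (V → Bool))),
    IsStepModel satA μ T 𝕊 t q ∧ x = Pqt satC t q c}


/-!
For every world `W` choose a model `f W` of `O_W` that satisfies `c` only if `O_W ⊨ c`, i.e. a
countermodel whenever `c` is not entailed. Pushing `π_t` forward along `W ↦ (f ∘ W, W)` gives a
`t`-step model in which `c` is observed along `W` exactly when some `W s` satisfies `φ`.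
Conversely, in any `t`-step model every point of the support whose path hits `φ` observes `c`,
and the path marginal is `π_t`; so no model does better.
-/

theorem _root_.PMF.map_snd_apply_s7 {α β : Type*} (q : PMF (α × β)) (b : β) :
    q.map Prod.snd b = ∑' a, q (a, b) := by
  classical
  rw [PMF.map_apply, ENNReal.tsum_prod']
  exact tsum_congr fun a => tsum_ite_eq' b (fun b' => q (a, b'))

section PathPMF

variable {S : Type*}

-- Also for `n = 0`, thanks to the convention `pathProb _ _ 0 = 1`.
lemma pathProb_cons (μ : PMF S) (T : S → PMF S) (n : ℕ) (s : S) (W : Fin n → S) :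
    pathProb μ T (n + 1) (Fin.cons s W) = μ s * pathProb (T s) T n W := by
  cases n with
  | zero => simp [pathProb]
  | succ n =>
    simp only [pathProb, dif_pos (Nat.succ_pos _)]
    exact congrArg (μ s * ·) (Fin.prod_univ_succ _)

lemma hasSum_pathProb (μ : PMF S) (T : S → PMF S) (t : ℕ) : HasSum (pathProb μ T t) 1 := by
  induction t generalizing μ with
  | zero => simpa [pathProb] using hasSum_unique (pathProb μ T 0)
  | succ n ih =>
    refine ENNReal.summable.hasSum_iff.2 ?_
    calc ∑' W, pathProb μ T (n + 1) W
        = ∑' p : S × (Fin n → S), μ p.1 * pathProb (T p.1) T n p.2 := by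
          rw [← (Fin.consEquiv fun _ => S).tsum_eq]
          exact tsum_congr fun p => pathProb_cons μ T n p.1 p.2
      _ = ∑' s, μ s := by
          simp only [ENNReal.tsum_prod', ENNReal.tsum_mul_left, (ih _).tsum_eq, mul_one]
      _ = 1 := μ.tsum_coe

noncomputable def pathPMF (μ : PMF S) (T : S → PMF S) (t : ℕ) : PMF (Fin t → S) :=
  ⟨pathProb μ T t, hasSum_pathProb μ T t⟩

end PathPMF

lemma exists_isOntModel_satC_iff_entails {satA : I → A → Prop} (satC : I → C → Prop) (c : C)
    {O : Set A} (hO : ∃ i, IsOntModel satA O i) :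
    ∃ i, IsOntModel satA O i ∧ (satC i c ↔ Entails satA satC O c) := by
  by_cases h : Entails satA satC O c
  · obtain ⟨i, hi⟩ := hO
    exact ⟨i, hi, iff_of_true (h i hi) h⟩
  · obtain ⟨i, hi, hic⟩ : ∃ i, IsOntModel satA O i ∧ ¬satC i c := by
      simpa [Entails] using h
    exact ⟨i, hi, iff_of_false hic h⟩

section StepModel

variable {satA : I → A → Prop} {satC : I → C → Prop} {μ : PMF (V → Bool)}
  {T : (V → Bool) → PMF (V → Bool)} {𝕊 : Finset (A × (V → Option Bool))} {t : ℕ}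

lemma Pqt_eq_toOuterMeasure (q : PMF ((Fin t → I) × (Fin t → (V → Bool)))) (c : C) :
    Pqt satC t q c = q.toOuterMeasure {x | ∃ s, satC (x.1 s) c} :=
  (PMF.toOuterMeasure_apply _ _).symm

lemma Pqt_map (p : PMF (Fin t → (V → Bool))) (f : (V → Bool) → I) (c : C) :
    Pqt satC t (p.map fun W => (f ∘ W, W)) c
      = p.toOuterMeasure {W | ∃ s, satC (f (W s)) c} := by
  rw [Pqt_eq_toOuterMeasure, PMF.toOuterMeasure_map_apply]
  rfl

lemma IsStepModel.map_snd {q : PMF ((Fin t → I) × (Fin t → (V → Bool)))}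
    (hq : IsStepModel satA μ T 𝕊 t q) : q.map Prod.snd = pathPMF μ T t :=
  PMF.ext fun W => (q.map_snd_apply_s7 W).trans (hq.2.2 W)

lemma isStepModel_map_pathPMF [Fintype V] {f : (V → Bool) → I}
    (hf : ∀ W, IsOntModel satA (OW 𝕊 W) (f W)) :
    IsStepModel satA μ T 𝕊 t ((pathPMF μ T t).map fun W => (f ∘ W, W)) := by
  refine ⟨?_, ?_, fun W => ?_⟩
  · rw [PMF.support_map]
    exact (Set.toFinite _).image _
  · intro _ hiw s
    obtain ⟨W, -, rfl⟩ := (PMF.mem_support_map_iff _ _ _).1 hiw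
    exact hf (W s)
  · rw [← PMF.map_snd_apply_s7, PMF.map_comp]
    exact DFunLike.congr_fun (PMF.map_id _) W

lemma toOuterMeasure_pathPMF_le_Pqt {c : C} {φ : (V → Bool) → Prop}
    (hφ : ∀ W, φ W → Entails satA satC (OW 𝕊 W) c)
    {q : PMF ((Fin t → I) × (Fin t → (V → Bool)))}
    (hq : IsStepModel satA μ T 𝕊 t q) :
    (pathPMF μ T t).toOuterMeasure {W | ∃ s, φ (W s)} ≤ Pqt satC t q c := by
  rw [← hq.map_snd, PMF.toOuterMeasure_map_apply, Pqt_eq_toOuterMeasure]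
  refine PMF.toOuterMeasure_mono _ ?_
  rintro ⟨i, W⟩ ⟨⟨s, hs⟩, hiW⟩
  exact ⟨s, hφ _ hs _ (hq.2.1 _ hiW s)⟩

end StepModel

theorem time_bounded_entailment_attained_general [Fintype V]
    (satA : I → A → Prop) (satC : I → C → Prop)
    (μ : PMF (V → Bool)) (T : (V → Bool) → PMF (V → Bool))
    (𝕊 : Finset (A × (V → Option Bool))) (c : C)
    (φ : (V → Bool) → Prop)
    (hφ : ∀ W : V → Bool, Entails satA satC (OW 𝕊 W) c ↔ φ W)
    (t : ℕ)
    (hmod : ∀ W : V → Bool, ∃ i : I, IsOntModel satA (OW 𝕊 W) i) :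
    ∃ q₀ : PMF ((Fin t → I) × (Fin t → (V → Bool))),
      IsStepModel satA μ T 𝕊 t q₀ ∧
      Pqt satC t q₀ c
        = (∑' W : Fin t → (V → Bool),
            {W : Fin t → (V → Bool) | ∃ i : Fin t, φ (W i)}.indicator (pathProb μ T t) W) ∧
      ∀ q : PMF ((Fin t → I) × (Fin t → (V → Bool))),
        IsStepModel satA μ T 𝕊 t q → Pqt satC t q₀ c ≤ Pqt satC t q c := by
  choose f hf_model hf_sat using fun W => exists_isOntModel_satC_iff_entails satC c (hmod W)
  have hPq₀ : Pqt satC t ((pathPMF μ T t).map fun W => (f ∘ W, W)) c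
      = (pathPMF μ T t).toOuterMeasure {W | ∃ s, φ (W s)} := by
    rw [Pqt_map]
    congr with W
    exact exists_congr fun s => (hf_sat _).trans (hφ _)
  refine ⟨_, isStepModel_map_pathPMF hf_model, hPq₀.trans (PMF.toOuterMeasure_apply _ _),
    fun q hq => hPq₀ ▸ toOuterMeasure_pathPMF_le_Pqt (fun W => (hφ W).2) hq⟩

/-- if `φ` is a context formula for `c` w.r.t. `𝕊`, then for every `t ≥ 1`
there is a `t`-step model `q₀` of the KB with
`P_{q₀}(c[1:t]) = Σ over paths W hitting φ of π_t(W)`, and `q₀` attains the infimum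
defining `P_K(c[1:t])`. -/
theorem time_bounded_entailment_attained [Fintype V]
    (satA : I → A → Prop) (satC : I → C → Prop)
    (μ : PMF (V → Bool)) (T : (V → Bool) → PMF (V → Bool))
    (𝕊 : Finset (A × (V → Option Bool))) (c : C)
    (φ : (V → Bool) → Prop)
    (hφ : ∀ W : V → Bool, Entails satA satC (OW 𝕊 W) c ↔ φ W)
    (t : ℕ) (ht : 1 ≤ t)
    (hmod : ∀ W : V → Bool, ∃ i : I, IsOntModel satA (OW 𝕊 W) i) :
    ∃ q₀ : PMF ((Fin t → I) × (Fin t → (V → Bool))),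
      IsStepModel satA μ T 𝕊 t q₀ ∧
      Pqt satC t q₀ c
        = (∑' W : Fin t → (V → Bool),
            {W : Fin t → (V → Bool) | ∃ i : Fin t, φ (W i)}.indicator (pathProb μ T t) W) ∧
      ∀ q : PMF ((Fin t → I) × (Fin t → (V → Bool))),
        IsStepModel satA μ T 𝕊 t q → Pqt satC t q₀ c ≤ Pqt satC t q c :=
  time_bounded_entailment_attained_general satA satC μ T 𝕊 c φ hφ t hmod

end DBL
end
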